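/- arXiv:0906.4997 — 3 statements merged into one kernel-verified Lean document; each statement's English description precedes it below -/
import Mathlib

section
/- Let G be a group with a left-invariant total ordering, K a subgroup of G, and suppose the set of left cosets G/K carries a total order ≺' satisfying gK ≺' hK implies fgK ≺' fhK for all f, g, h ∈ G, together with a left-invariant ordering ≺ of K. Define g > 1 iff (g ∈ K and g ≻ 1) or (g ∉ K and gK ≻' K). Then this defines a positive cone of a left-invariant total ordering of G, and K is convex with respect to this ordering. -/
/-!
Order `G` lexicographically: first by cosets, and inside a coset by the order of `K`.
Closure of the cone under products follows from left invariance of both orders (the coset of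
`a * b` lies above that of `a` as soon as the coset of `b` lies above `K`), and trichotomy from
trichotomy in `K` and in `G ⧸ K`. If `g ∉ K` lay between two elements of `K`, left invariance
would put the coset of `g` both above and below `K`.
-/

theorem QuotientGroup.mk_one_eq_mk_iff {G : Type*} [Group G] {K : Subgroup G} {g : G} :
    ((1 : G) : G ⧸ K) = g ↔ g ∈ K := by
  rw [QuotientGroup.eq, inv_one, one_mul]

section LeftInvariant

variable {H : Type*} [Group H] {r : H → H → Prop}
  (hinv : ∀ f g h : H, r g h → r (f * g) (f * h))
include hinv

theorem rel_mul_of_rel_one (a : H) {b : H} (hb : r 1 b) : r a (a * b) := by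
  simpa using hinv a 1 b hb

theorem rel_one_mul [IsTrans H r] {a b : H} (ha : r 1 a) (hb : r 1 b) : r 1 (a * b) :=
  trans_of r ha (rel_mul_of_rel_one hinv a hb)

theorem rel_one_inv {g : H} (hg : r g 1) : r 1 g⁻¹ := by
  simpa using hinv g⁻¹ g 1 hg

end LeftInvariant

section QuotientInvariant

variable {G : Type*} [Group G] {K : Subgroup G} {ltQ : G ⧸ K → G ⧸ K → Prop}
  (hQinv : ∀ f g h : G, ltQ (g : G ⧸ K) (h : G ⧸ K) →
    ltQ ((f * g : G) : G ⧸ K) ((f * h : G) : G ⧸ K))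
include hQinv

theorem mk_rel_mk_mul (a : G) {b : G} (hb : ltQ ((1 : G) : G ⧸ K) b) :
    ltQ (a : G ⧸ K) ((a * b : G) : G ⧸ K) := by
  simpa using hQinv a 1 b hb

theorem mk_one_rel_mk_inv {g : G} (hg : ltQ (g : G ⧸ K) ((1 : G) : G ⧸ K)) :
    ltQ ((1 : G) : G ⧸ K) ((g⁻¹ : G) : G ⧸ K) := by
  simpa using hQinv g⁻¹ g 1 hg

end QuotientInvariant

section LexCone

variable {G : Type*} [Group G] {K : Subgroup G}

def lexCone (ltK : K → K → Prop) (ltQ : G ⧸ K → G ⧸ K → Prop) : Set G :=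
  {g | (∃ hg : g ∈ K, ltK 1 ⟨g, hg⟩) ∨ (g ∉ K ∧ ltQ ((1 : G) : G ⧸ K) (g : G ⧸ K))}

variable {ltK : K → K → Prop} {ltQ : G ⧸ K → G ⧸ K → Prop}

theorem mem_lexCone_of_mk_one_rel [Std.Irrefl ltQ] {g : G}
    (hg : ltQ ((1 : G) : G ⧸ K) (g : G ⧸ K)) : g ∈ lexCone ltK ltQ := by
  refine Or.inr ⟨fun hgK => ?_, hg⟩
  rw [QuotientGroup.mk_one_eq_mk_iff.mpr hgK] at hg
  exact irrefl_of ltQ _ hg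

theorem one_notMem_lexCone [Std.Irrefl ltK] : (1 : G) ∉ lexCone ltK ltQ := by
  rintro (⟨_, h⟩ | ⟨h, _⟩)
  · exact irrefl_of ltK 1 h
  · exact h K.one_mem

theorem mul_mem_lexCone [IsTrans K ltK] [IsStrictOrder (G ⧸ K) ltQ]
    (hKinv : ∀ f g h : K, ltK g h → ltK (f * g) (f * h))
    (hQinv : ∀ f g h : G, ltQ (g : G ⧸ K) (h : G ⧸ K) →
      ltQ ((f * g : G) : G ⧸ K) ((f * h : G) : G ⧸ K))
    {a b : G} (ha : a ∈ lexCone ltK ltQ) (hb : b ∈ lexCone ltK ltQ) :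
    a * b ∈ lexCone ltK ltQ := by
  rcases ha with ⟨haK, ha⟩ | ⟨-, ha⟩ <;> rcases hb with ⟨hbK, hb⟩ | ⟨-, hb⟩
  · exact Or.inl ⟨K.mul_mem haK hbK, rel_one_mul hKinv ha hb⟩
  · apply mem_lexCone_of_mk_one_rel
    simpa [QuotientGroup.mk_one_eq_mk_iff.mpr haK] using mk_rel_mk_mul hQinv a hb
  · apply mem_lexCone_of_mk_one_rel
    rwa [QuotientGroup.mk_mul_of_mem a hbK]
  · exact mem_lexCone_of_mk_one_rel (trans_of ltQ ha (mk_rel_mk_mul hQinv a hb))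

theorem inv_notMem_lexCone [IsStrictOrder K ltK] [IsStrictOrder (G ⧸ K) ltQ]
    (hKinv : ∀ f g h : K, ltK g h → ltK (f * g) (f * h))
    (hQinv : ∀ f g h : G, ltQ (g : G ⧸ K) (h : G ⧸ K) →
      ltQ ((f * g : G) : G ⧸ K) ((f * h : G) : G ⧸ K))
    {g : G} (hg : g ∈ lexCone ltK ltQ) : g⁻¹ ∉ lexCone ltK ltQ := fun hg' =>
  one_notMem_lexCone (by simpa using mul_mem_lexCone hKinv hQinv hg hg')

theorem mem_or_inv_mem_lexCone [IsStrictTotalOrder K ltK] [IsStrictTotalOrder (G ⧸ K) ltQ]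
    (hKinv : ∀ f g h : K, ltK g h → ltK (f * g) (f * h))
    (hQinv : ∀ f g h : G, ltQ (g : G ⧸ K) (h : G ⧸ K) →
      ltQ ((f * g : G) : G ⧸ K) ((f * h : G) : G ⧸ K))
    {g : G} (hg : g ≠ 1) : g ∈ lexCone ltK ltQ ∨ g⁻¹ ∈ lexCone ltK ltQ := by
  by_cases hgK : g ∈ K
  · rcases trichotomous_of ltK 1 ⟨g, hgK⟩ with h | h | h
    · exact Or.inl (Or.inl ⟨hgK, h⟩)
    · exact absurd (congrArg Subtype.val h).symm hg
    · exact Or.inr (Or.inl ⟨K.inv_mem hgK, rel_one_inv hKinv h⟩)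
  · rcases trichotomous_of ltQ ((1 : G) : G ⧸ K) g with h | h | h
    · exact Or.inl (mem_lexCone_of_mk_one_rel h)
    · exact absurd (QuotientGroup.mk_one_eq_mk_iff.mp h) hgK
    · exact Or.inr (mem_lexCone_of_mk_one_rel (mk_one_rel_mk_inv hQinv h))

theorem mk_rel_mk_of_inv_mul_mem_lexCone
    (hQinv : ∀ f g h : G, ltQ (g : G ⧸ K) (h : G ⧸ K) →
      ltQ ((f * g : G) : G ⧸ K) ((f * h : G) : G ⧸ K))
    {a b : G} (h : a⁻¹ * b ∈ lexCone ltK ltQ) (hab : (a : G ⧸ K) ≠ b) :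
    ltQ (a : G ⧸ K) (b : G ⧸ K) := by
  rcases h with ⟨hK, -⟩ | ⟨-, h⟩
  · exact absurd (QuotientGroup.eq.mpr hK) hab
  · simpa using mk_rel_mk_mul hQinv a h

theorem mem_of_inv_mul_mem_lexCone_of_inv_mul_mem_lexCone [Std.Asymm ltQ]
    (hQinv : ∀ f g h : G, ltQ (g : G ⧸ K) (h : G ⧸ K) →
      ltQ ((f * g : G) : G ⧸ K) ((f * h : G) : G ⧸ K))
    {f g h : G} (hf : f ∈ K) (hh : h ∈ K)
    (hfg : f⁻¹ * g ∈ lexCone ltK ltQ) (hgh : g⁻¹ * h ∈ lexCone ltK ltQ) : g ∈ K := by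
  by_contra hg
  have hg' : ((1 : G) : G ⧸ K) ≠ g := fun e => hg (QuotientGroup.mk_one_eq_mk_iff.mp e)
  rw [← QuotientGroup.mk_one_eq_mk_iff] at hf hh
  have below := mk_rel_mk_of_inv_mul_mem_lexCone hQinv hfg (hf ▸ hg')
  have above := mk_rel_mk_of_inv_mul_mem_lexCone hQinv hgh (hh ▸ hg'.symm)
  rw [← hf] at below
  rw [← hh] at above
  exact asymm_of ltQ below above

end LexCone

theorem cone_trichotomy {G : Type*} [Group G] {P : Set G} (one_notMem : (1 : G) ∉ P)
    (inv_notMem : ∀ g ∈ P, g⁻¹ ∉ P) (mem_or_inv_mem : ∀ g : G, g ≠ 1 → g ∈ P ∨ g⁻¹ ∈ P)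
    (g : G) : (g ∈ P ∧ g⁻¹ ∉ P ∧ g ≠ 1) ∨ (g⁻¹ ∈ P ∧ g ∉ P ∧ g ≠ 1) ∨
      (g = 1 ∧ g ∉ P ∧ g⁻¹ ∉ P) := by
  by_cases hg : g = 1
  · subst hg
    exact Or.inr (Or.inr ⟨rfl, one_notMem, by simpa using one_notMem⟩)
  · rcases mem_or_inv_mem g hg with h | h
    · exact Or.inl ⟨h, inv_notMem g h, hg⟩
    · exact Or.inr (Or.inl ⟨h, fun h' => inv_notMem g h' h, hg⟩)

theorem stmt_2 {G : Type*} [Group G] (K : Subgroup G)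
    (ltK : K → K → Prop) (hK : IsStrictTotalOrder K ltK)
    (hKinv : ∀ f g h : K, ltK g h → ltK (f * g) (f * h))
    (ltQ : G ⧸ K → G ⧸ K → Prop) (hQ : IsStrictTotalOrder (G ⧸ K) ltQ)
    (hQinv : ∀ f g h : G, ltQ (g : G ⧸ K) (h : G ⧸ K) →
      ltQ ((f * g : G) : G ⧸ K) ((f * h : G) : G ⧸ K)) :
    let P : Set G := {g | (∃ hg : g ∈ K, ltK 1 ⟨g, hg⟩) ∨
      (g ∉ K ∧ ltQ ((1 : G) : G ⧸ K) (g : G ⧸ K))}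
    (∀ a ∈ P, ∀ b ∈ P, a * b ∈ P) ∧
    (∀ g : G, (g ∈ P ∧ g⁻¹ ∉ P ∧ g ≠ 1) ∨ (g⁻¹ ∈ P ∧ g ∉ P ∧ g ≠ 1) ∨
      (g = 1 ∧ g ∉ P ∧ g⁻¹ ∉ P)) ∧
    (∀ f ∈ K, ∀ h ∈ K, ∀ g : G, f⁻¹ * g ∈ P → g⁻¹ * h ∈ P → g ∈ K) := by
  intro P
  exact ⟨fun a ha b hb => mul_mem_lexCone hKinv hQinv ha hb,
    cone_trichotomy one_notMem_lexCone (fun _ => inv_notMem_lexCone hKinv hQinv)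
      (fun _ => mem_or_inv_mem_lexCone hKinv hQinv),
    fun f hf h hh _ => mem_of_inv_mul_mem_lexCone_of_inv_mul_mem_lexCone hQinv hf hh⟩
end

section
/- Let < be a left-invariant total order on a group G such that for all g, h > 1 one has g < hg². Then for all g, h > 1 and every positive integer n ≥ 2, g < hgⁿ. -/
/-! Multiplying `h > 1` on the right by `g > 1` stays above `1`, so the Conradian inequality
`g < h' * g ^ n`, applied to `h' = h * g`, gives `g < h * g ^ (n + 1)`; induct from `n = 2`. -/

section LeftOrdered

variable {G : Type*} [Group G] [LinearOrder G]

theorem one_lt_mul_of_left_invariant (hleft : ∀ f g h : G, g < h → f * g < f * h)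
    {g h : G} (hg : 1 < g) (hh : 1 < h) : 1 < h * g :=
  hh.trans (by simpa using hleft h 1 g hg)

theorem lt_mul_pow_succ_of_forall_lt_mul_pow (hleft : ∀ f g h : G, g < h → f * g < f * h)
    {g : G} (hg : 1 < g) {n : ℕ} (hn : ∀ h : G, 1 < h → g < h * g ^ n)
    {h : G} (hh : 1 < h) : g < h * g ^ (n + 1) := by
  rw [pow_succ', ← mul_assoc]
  exact hn (h * g) (one_lt_mul_of_left_invariant hleft hg hh)

end LeftOrdered

theorem stmt_3 {G : Type*} [Group G] [LinearOrder G]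
    (hleft : ∀ f g h : G, g < h → f * g < f * h)
    (hC : ∀ g h : G, 1 < g → 1 < h → g < h * g ^ 2) :
    ∀ g h : G, 1 < g → 1 < h → ∀ n : ℕ, 2 ≤ n → g < h * g ^ n := by
  intro g h hg hh n hn
  induction n, hn using Nat.le_induction generalizing h with
  | base => exact hC g h hg hh
  | succ n _ ih => exact lt_mul_pow_succ_of_forall_lt_mul_pow hleft hg ih hh
end

section
/- Let F₂ be the free group on x, y, and φ the automorphism with φ(x) = xy⁻¹x, φ(y) = xy⁻¹x². If K is a normal subgroup of F₂ containing the commutator subgroup [F₂, F₂] (equivalently, F₂/K is abelian), then φ⁶(K) = K. -/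
/-! On the abelianization `ℤ²` the automorphism `φ` acts by the matrix `A = [[2, 3], [-1, -1]]`
of trace `1` and determinant `1`, so `A² - A + 1 = 0`, `A³ = -1` and `A⁶ = 1`. Thus
`φ⁶(g) ≡ g` modulo `[F₂, F₂] ≤ K` for every `g`, and since `φ` is surjective this forces
`φ⁶(K) = K`. -/

theorem Subgroup.map_eq_self_of_forall_mul_inv_mem {G : Type*} [Group G] {f : G →* G}
    (hf : Function.Surjective f) {K : Subgroup G} (h : ∀ g, f g * g⁻¹ ∈ K) :
    K.map f = K := by
  apply le_antisymm
  · rintro _ ⟨k, hk, rfl⟩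
    simpa using mul_mem (h k) hk
  · intro k hk
    obtain ⟨g, rfl⟩ := hf k
    exact ⟨g, by simpa using mul_mem (inv_mem (h g)) hk, rfl⟩

namespace Abelianization

variable {G : Type*} [Group G]

theorem mul_inv_mem_commutator_of_map_eq_id {f : G →* G} (hf : map f = MonoidHom.id _) (g : G) :
    f g * g⁻¹ ∈ commutator G := by
  rw [← ker_of, MonoidHom.mem_ker, map_mul, map_inv, ← map_of, hf, MonoidHom.id_apply,
    mul_inv_cancel]

theorem map_comp_self_eq_id_of_map_eq_inv {f : G →* G} (hf : map f = invMonoidHom) :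
    map (f.comp f) = MonoidHom.id _ := by
  ext g
  simp [← map_comp, hf]

end Abelianization

section TwoGenerators

open FreeGroup

def phi : FreeGroup (Fin 2) →* FreeGroup (Fin 2) :=
  FreeGroup.lift ![of 0 * (of 1)⁻¹ * of 0, of 0 * (of 1)⁻¹ * of 0 ^ 2]

def phiInv : FreeGroup (Fin 2) →* FreeGroup (Fin 2) :=
  FreeGroup.lift ![(of 0)⁻¹ * of 1, (of 0)⁻¹ * of 1 * (of 0)⁻¹ * (of 0)⁻¹ * of 1]

theorem phi_comp_phiInv : phi.comp phiInv = MonoidHom.id _ := by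
  refine FreeGroup.ext_hom _ _ fun i => ?_
  fin_cases i <;> simp [phi, phiInv, pow_two] <;> group

theorem phi_surjective : Function.Surjective phi :=
  Function.RightInverse.surjective (f := phi) (g := phiInv) (DFunLike.congr_fun phi_comp_phiInv)

theorem abelianization_map_phi_cube :
    Abelianization.map (phi.comp (phi.comp phi)) = invMonoidHom := by
  refine Abelianization.hom_ext _ _ (FreeGroup.ext_hom _ _ fun i => ?_)
  apply Additive.ofMul.injective
  fin_cases i <;> simp [phi, Abelianization.map_of, pow_two] <;> abel

end TwoGenerators

theorem stmt_7_general (K : Subgroup (FreeGroup (Fin 2)))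
    (hab : commutator (FreeGroup (Fin 2)) ≤ K) :
    let x : FreeGroup (Fin 2) := FreeGroup.of 0
    let y : FreeGroup (Fin 2) := FreeGroup.of 1
    let φ : FreeGroup (Fin 2) →* FreeGroup (Fin 2) :=
      FreeGroup.lift ![x * y⁻¹ * x, x * y⁻¹ * x ^ 2]
    Subgroup.map (φ.comp (φ.comp (φ.comp (φ.comp (φ.comp φ))))) K = K := by
  intro x y φ
  set θ := phi.comp (phi.comp phi)
  have hθ_surj : Function.Surjective θ := phi_surjective.comp (phi_surjective.comp phi_surjective)
  have hθθ_surj : Function.Surjective (θ.comp θ) := hθ_surj.comp hθ_surj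
  change Subgroup.map (θ.comp θ) K = K
  exact Subgroup.map_eq_self_of_forall_mul_inv_mem hθθ_surj fun g => hab <|
    Abelianization.mul_inv_mem_commutator_of_map_eq_id
      (Abelianization.map_comp_self_eq_id_of_map_eq_inv abelianization_map_phi_cube) g

theorem stmt_7 (K : Subgroup (FreeGroup (Fin 2))) [K.Normal]
    (hab : commutator (FreeGroup (Fin 2)) ≤ K) :
    let x : FreeGroup (Fin 2) := FreeGroup.of 0
    let y : FreeGroup (Fin 2) := FreeGroup.of 1
    let φ : FreeGroup (Fin 2) →* FreeGroup (Fin 2) :=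
      FreeGroup.lift ![x * y⁻¹ * x, x * y⁻¹ * x ^ 2]
    Subgroup.map (φ.comp (φ.comp (φ.comp (φ.comp (φ.comp φ))))) K = K :=
  stmt_7_general K hab
end
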